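/- arXiv:1711.00675 — 2 statements merged into one kernel-verified Lean document; each statement's English description precedes it below -/
import Mathlib

section
/- Let H be a Hilbert space, M₀, M₁ ∈ L(H), R(M₀) closed, pencil regular. With the notation of the block decomposition H = N(M₀)^⊥ ⊕ N(M₀) and H = R(M₀) ⊕ R(M₀)^⊥, set M̃₀ := Q M₀ ι_{N(M₀)^⊥} and M̃₁ := Q M₁ ι_{N(M₀)^⊥} − (Q M₁ ι_{N(M₀)})(P⊥ M₁ ι_{N(M₀)})⁻¹(P⊥ M₁ ι_{N(M₀)^⊥}), where Q, P⊥ are the orthogonal projections onto R(M₀) and R(M₀)^⊥. Then M̃₀ : N(M₀)^⊥ → R(M₀) is boundedly invertible and σ(𝓜) = σ(−M̃₀⁻¹ M̃₁). -/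
set_option synthInstance.maxHeartbeats 1000000
set_option maxHeartbeats 1000000

open MeasureTheory Filter Set Complex
open scoped Topology

noncomputable section

variable {H : Type*} [NormedAddCommGroup H] [InnerProductSpace ℂ H] [CompleteSpace H]

/-- `Q` is the orthogonal projection onto `R(M₀)` (characterised by `x − Q x ⊥ R(M₀)`),
`Binv` the inverse of `P⊥ M₁ ι_{N(M₀)}`.  Then `M̃₀ = Q M₀ ι_{N(M₀)^⊥}` is boundedly
invertible and `σ(𝓜) = σ(−M̃₀⁻¹ M̃₁)`. -/
theorem stmt_13 (M₀ M₁ : H →L[ℂ] H)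
    (hR : IsClosed (LinearMap.range (M₀ : H →ₗ[ℂ] H) : Set H))
    (hreg : ∃ ν C : ℝ, ∀ z : ℂ, ν < z.re →
      ∃ S : H →L[ℂ] H, (z • M₀ + M₁).comp S = ContinuousLinearMap.id ℂ H ∧
        S.comp (z • M₀ + M₁) = ContinuousLinearMap.id ℂ H ∧ ‖S‖ ≤ C)
    (Q : H →L[ℂ] ↥(LinearMap.range (M₀ : H →ₗ[ℂ] H)))
    (hQ : ∀ x : H, x - ((Q x : H)) ∈ (LinearMap.range (M₀ : H →ₗ[ℂ] H))ᗮ)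
    (Binv : ↥((LinearMap.range (M₀ : H →ₗ[ℂ] H))ᗮ) →L[ℂ] ↥(LinearMap.ker (M₀ : H →ₗ[ℂ] H)))
    (hBinv :
      ((Submodule.orthogonalProjectionOnto ((LinearMap.range (M₀ : H →ₗ[ℂ] H))ᗮ)).comp
          (M₁.comp (LinearMap.ker (M₀ : H →ₗ[ℂ] H)).subtypeL)).comp Binv =
        ContinuousLinearMap.id ℂ ↥((LinearMap.range (M₀ : H →ₗ[ℂ] H))ᗮ) ∧
      Binv.comp ((Submodule.orthogonalProjectionOnto ((LinearMap.range (M₀ : H →ₗ[ℂ] H))ᗮ)).comp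
          (M₁.comp (LinearMap.ker (M₀ : H →ₗ[ℂ] H)).subtypeL)) =
        ContinuousLinearMap.id ℂ ↥(LinearMap.ker (M₀ : H →ₗ[ℂ] H)))
    (Mt0 Mt1 : ↥((LinearMap.ker (M₀ : H →ₗ[ℂ] H))ᗮ) →L[ℂ] ↥(LinearMap.range (M₀ : H →ₗ[ℂ] H)))
    (hMt0 : Mt0 = Q.comp (M₀.comp ((LinearMap.ker (M₀ : H →ₗ[ℂ] H))ᗮ).subtypeL))
    (hMt1 : Mt1 = Q.comp (M₁.comp ((LinearMap.ker (M₀ : H →ₗ[ℂ] H))ᗮ).subtypeL) -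
      ((Q.comp (M₁.comp (LinearMap.ker (M₀ : H →ₗ[ℂ] H)).subtypeL)).comp Binv).comp
        ((Submodule.orthogonalProjectionOnto ((LinearMap.range (M₀ : H →ₗ[ℂ] H))ᗮ)).comp
          (M₁.comp ((LinearMap.ker (M₀ : H →ₗ[ℂ] H))ᗮ).subtypeL))) :
    (∃ S : ↥(LinearMap.range (M₀ : H →ₗ[ℂ] H)) →L[ℂ] ↥((LinearMap.ker (M₀ : H →ₗ[ℂ] H))ᗮ),
      Mt0.comp S = ContinuousLinearMap.id ℂ ↥(LinearMap.range (M₀ : H →ₗ[ℂ] H)) ∧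
      S.comp Mt0 = ContinuousLinearMap.id ℂ ↥((LinearMap.ker (M₀ : H →ₗ[ℂ] H))ᗮ)) ∧
    (∀ S : ↥(LinearMap.range (M₀ : H →ₗ[ℂ] H)) →L[ℂ] ↥((LinearMap.ker (M₀ : H →ₗ[ℂ] H))ᗮ),
      Mt0.comp S = ContinuousLinearMap.id ℂ ↥(LinearMap.range (M₀ : H →ₗ[ℂ] H)) →
      S.comp Mt0 = ContinuousLinearMap.id ℂ ↥((LinearMap.ker (M₀ : H →ₗ[ℂ] H))ᗮ) →
      spectrum ℂ (-(S.comp Mt1)) = {z : ℂ | ¬ IsUnit (z • M₀ + M₁)}) := by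
  clear hreg
  classical
  haveI : CompleteSpace (LinearMap.range (M₀ : H →ₗ[ℂ] H)) := hR.completeSpace_coe
  haveI : CompleteSpace (LinearMap.ker (M₀ : H →ₗ[ℂ] H)) := (ContinuousLinearMap.isClosed_ker M₀).completeSpace_coe
  -- basic facts about Q
  have hQmem : ∀ y ∈ (LinearMap.range (M₀ : H →ₗ[ℂ] H)), ((Q y : H)) = y := by
    intro y hy
    have h1 : y - (Q y : H) ∈ (LinearMap.range (M₀ : H →ₗ[ℂ] H))ᗮ := hQ y
    have h2 : y - (Q y : H) ∈ (LinearMap.range (M₀ : H →ₗ[ℂ] H)) := Submodule.sub_mem _ hy (Q y).2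
    have h3 : (inner ℂ (y - (Q y : H)) (y - (Q y : H)) : ℂ) = 0 :=
      (Submodule.mem_orthogonal _ _).1 h1 _ h2
    have h4 : y - (Q y : H) = 0 := inner_self_eq_zero.mp h3
    exact (sub_eq_zero.mp h4).symm
  have hM0mem : ∀ x : H, M₀ x ∈ (LinearMap.range (M₀ : H →ₗ[ℂ] H)) := fun x => ⟨x, rfl⟩
  have hQM0 : ∀ x : H, ((Q (M₀ x) : H)) = M₀ x := fun x => hQmem _ (hM0mem x)
  -- basic facts about the projection onto the orthocomplement of the range
  have hPR : ∀ y ∈ (LinearMap.range (M₀ : H →ₗ[ℂ] H)), (Submodule.orthogonalProjectionOnto ((LinearMap.range (M₀ : H →ₗ[ℂ] H))ᗮ)) y = 0 := fun y hy =>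
    Submodule.orthogonalProjectionOnto_apply_of_mem_orthogonal
      (Submodule.le_orthogonal_orthogonal _ hy)
  have hPmem : ∀ w : ↥((LinearMap.range (M₀ : H →ₗ[ℂ] H))ᗮ), (Submodule.orthogonalProjectionOnto ((LinearMap.range (M₀ : H →ₗ[ℂ] H))ᗮ)) (w : H) = w := fun w =>
    Submodule.orthogonalProjectionOnto_mem_subspace_eq_self w
  have hPM0 : ∀ x : H, (Submodule.orthogonalProjectionOnto ((LinearMap.range (M₀ : H →ₗ[ℂ] H))ᗮ)) (M₀ x) = 0 := fun x => hPR _ (hM0mem x)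
  -- decomposition of y into Q y and P y
  have hPQ : ∀ y : H, (((Submodule.orthogonalProjectionOnto ((LinearMap.range (M₀ : H →ₗ[ℂ] H))ᗮ)) y : H)) = y - ((Q y : H)) := by
    intro y
    have h1 : (Submodule.orthogonalProjectionOnto ((LinearMap.range (M₀ : H →ₗ[ℂ] H))ᗮ)) y = (Submodule.orthogonalProjectionOnto ((LinearMap.range (M₀ : H →ₗ[ℂ] H))ᗮ)) ((Q y : H)) + (Submodule.orthogonalProjectionOnto ((LinearMap.range (M₀ : H →ₗ[ℂ] H))ᗮ)) (y - (Q y : H)) := by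
      rw [← map_add]; congr 1; abel
    rw [h1, hPR _ (Q y).2, hPmem ⟨y - (Q y : H), hQ y⟩, zero_add]
  have hdecompY : ∀ y : H, y = ((Q y : H)) + (((Submodule.orthogonalProjectionOnto ((LinearMap.range (M₀ : H →ₗ[ℂ] H))ᗮ)) y : H)) := by
    intro y; rw [hPQ]; abel
  -- decomposition of x into its components
  have hdecompX : ∀ x : H, x = ((Submodule.orthogonalProjectionOnto (LinearMap.ker (M₀ : H →ₗ[ℂ] H))ᗮ x : H)) +
      ((Submodule.orthogonalProjectionOnto (LinearMap.ker (M₀ : H →ₗ[ℂ] H)) x : H)) := by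
    intro x
    rw [add_comm]
    exact (Submodule.starProjection_add_starProjection_orthogonal (K := LinearMap.ker (M₀ : H →ₗ[ℂ] H)) x).symm
  have hprojNperp : ∀ (u : ↥((LinearMap.ker (M₀ : H →ₗ[ℂ] H))ᗮ)) (v : ↥(LinearMap.ker (M₀ : H →ₗ[ℂ] H))),
      Submodule.orthogonalProjectionOnto (LinearMap.ker (M₀ : H →ₗ[ℂ] H))ᗮ ((u : H) + (v : H)) = u := by
    intro u v
    rw [map_add, Submodule.orthogonalProjectionOnto_mem_subspace_eq_self,
      Submodule.orthogonalProjectionOnto_apply_of_mem_orthogonal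
        (Submodule.le_orthogonal_orthogonal (LinearMap.ker (M₀ : H →ₗ[ℂ] H)) v.2), add_zero]
  have hM0ker : ∀ v : ↥(LinearMap.ker (M₀ : H →ₗ[ℂ] H)), M₀ (v : H) = 0 := fun v => v.2
  -- pointwise versions of hBinv
  have hB1 : ∀ w : ↥((LinearMap.range (M₀ : H →ₗ[ℂ] H))ᗮ), (Submodule.orthogonalProjectionOnto ((LinearMap.range (M₀ : H →ₗ[ℂ] H))ᗮ)) (M₁ ((Binv w : H))) = w := by
    intro w
    have := ContinuousLinearMap.ext_iff.mp hBinv.1 w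
    simpa using this
  have hB2 : ∀ v : ↥(LinearMap.ker (M₀ : H →ₗ[ℂ] H)), Binv ((Submodule.orthogonalProjectionOnto ((LinearMap.range (M₀ : H →ₗ[ℂ] H))ᗮ)) (M₁ (v : H))) = v := by
    intro v
    have := ContinuousLinearMap.ext_iff.mp hBinv.2 v
    simpa using this
  -- pointwise versions of hMt0, hMt1
  have hMt0' : ∀ u : ↥((LinearMap.ker (M₀ : H →ₗ[ℂ] H))ᗮ), Mt0 u = Q (M₀ (u : H)) := by
    intro u; rw [hMt0]; rfl
  have hMt1' : ∀ u : ↥((LinearMap.ker (M₀ : H →ₗ[ℂ] H))ᗮ),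
      Mt1 u = Q (M₁ (u : H)) - Q (M₁ ((Binv ((Submodule.orthogonalProjectionOnto ((LinearMap.range (M₀ : H →ₗ[ℂ] H))ᗮ)) (M₁ (u : H))) : H))) := by
    intro u; rw [hMt1]; rfl
  -- the two block computations
  have hQc : ∀ (z : ℂ) (u : ↥((LinearMap.ker (M₀ : H →ₗ[ℂ] H))ᗮ)) (v : ↥(LinearMap.ker (M₀ : H →ₗ[ℂ] H))),
      Q ((z • M₀ + M₁) ((u : H) + (v : H))) = z • Mt0 u + Q (M₁ (u : H)) + Q (M₁ (v : H)) := by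
    intro z u v
    have h : (z • M₀ + M₁) ((u : H) + (v : H)) =
        z • M₀ (u : H) + (M₁ (u : H) + M₁ (v : H)) := by
      simp [map_add, hM0ker v, smul_add]
      abel
    rw [h, map_add, _root_.map_smul, hMt0', map_add, add_assoc]
  have hPc : ∀ (z : ℂ) (u : ↥((LinearMap.ker (M₀ : H →ₗ[ℂ] H))ᗮ)) (v : ↥(LinearMap.ker (M₀ : H →ₗ[ℂ] H))),
      (Submodule.orthogonalProjectionOnto ((LinearMap.range (M₀ : H →ₗ[ℂ] H))ᗮ)) ((z • M₀ + M₁) ((u : H) + (v : H))) = (Submodule.orthogonalProjectionOnto ((LinearMap.range (M₀ : H →ₗ[ℂ] H))ᗮ)) (M₁ (u : H)) + (Submodule.orthogonalProjectionOnto ((LinearMap.range (M₀ : H →ₗ[ℂ] H))ᗮ)) (M₁ (v : H)) := by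
    intro z u v
    have h : (z • M₀ + M₁) ((u : H) + (v : H)) =
        z • M₀ (u : H) + (M₁ (u : H) + M₁ (v : H)) := by
      simp [map_add, hM0ker v, smul_add]
      abel
    rw [h, map_add, _root_.map_smul, hPM0, smul_zero, zero_add, map_add]
  -- key equivalence
  have key : ∀ z : ℂ, Function.Bijective ⇑(z • M₀ + M₁) ↔
      Function.Bijective ⇑(z • Mt0 + Mt1) := by
    intro z
    constructor
    · rintro ⟨hinj, hsurj⟩
      constructor
      · rw [injective_iff_map_eq_zero]
        intro u hu
        set v : ↥(LinearMap.ker (M₀ : H →ₗ[ℂ] H)) := -(Binv ((Submodule.orthogonalProjectionOnto ((LinearMap.range (M₀ : H →ₗ[ℂ] H))ᗮ)) (M₁ (u : H)))) with hvdef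
        have hQx : Q ((z • M₀ + M₁) ((u : H) + (v : H))) = 0 := by
          rw [hQc z u v]
          have h1 : Q (M₁ (v : H)) = -Q (M₁ ((Binv ((Submodule.orthogonalProjectionOnto ((LinearMap.range (M₀ : H →ₗ[ℂ] H))ᗮ)) (M₁ (u : H))) : H))) := by
            rw [hvdef]; push_cast; rw [map_neg, map_neg]
          rw [h1]
          have h5 : z • Mt0 u + Q (M₁ (u : H)) + -Q (M₁ ((Binv ((Submodule.orthogonalProjectionOnto ((LinearMap.range (M₀ : H →ₗ[ℂ] H))ᗮ)) (M₁ (u : H))) : H))) =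
              z • Mt0 u + Mt1 u := by rw [hMt1' u]; abel
          rw [h5]
          have h6 : (z • Mt0 + Mt1) u = z • Mt0 u + Mt1 u := rfl
          rw [← h6, hu]
        have hPx : (Submodule.orthogonalProjectionOnto ((LinearMap.range (M₀ : H →ₗ[ℂ] H))ᗮ)) ((z • M₀ + M₁) ((u : H) + (v : H))) = 0 := by
          rw [hPc z u v]
          have h1 : (Submodule.orthogonalProjectionOnto ((LinearMap.range (M₀ : H →ₗ[ℂ] H))ᗮ)) (M₁ (v : H)) = -(Submodule.orthogonalProjectionOnto ((LinearMap.range (M₀ : H →ₗ[ℂ] H))ᗮ)) (M₁ ((Binv ((Submodule.orthogonalProjectionOnto ((LinearMap.range (M₀ : H →ₗ[ℂ] H))ᗮ)) (M₁ (u : H))) : H))) := by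
            rw [hvdef]; push_cast; rw [map_neg, map_neg]
          rw [h1, hB1, add_neg_cancel]
        have hx0 : (z • M₀ + M₁) ((u : H) + (v : H)) = 0 := by
          have h := hdecompY ((z • M₀ + M₁) ((u : H) + (v : H)))
          rw [hQx, hPx] at h
          simpa using h
        have hxz : (u : H) + (v : H) = 0 := by
          rw [injective_iff_map_eq_zero] at hinj
          exact hinj _ hx0
        have hu0 : Submodule.orthogonalProjectionOnto (LinearMap.ker (M₀ : H →ₗ[ℂ] H))ᗮ ((u : H) + (v : H)) = u := hprojNperp u v
        rw [hxz, map_zero] at hu0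
        exact hu0.symm
      · intro w
        obtain ⟨x, hx⟩ := hsurj (w : H)
        set u : ↥((LinearMap.ker (M₀ : H →ₗ[ℂ] H))ᗮ) := Submodule.orthogonalProjectionOnto (LinearMap.ker (M₀ : H →ₗ[ℂ] H))ᗮ x with hudef
        set v : ↥(LinearMap.ker (M₀ : H →ₗ[ℂ] H)) := Submodule.orthogonalProjectionOnto (LinearMap.ker (M₀ : H →ₗ[ℂ] H)) x with hvdef
        have hxuv : x = (u : H) + (v : H) := hdecompX x
        rw [hxuv] at hx
        have hQx : z • Mt0 u + Q (M₁ (u : H)) + Q (M₁ (v : H)) = w := by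
          rw [← hQc z u v, hx]
          exact Subtype.ext (hQmem _ w.2)
        have hPx : (Submodule.orthogonalProjectionOnto ((LinearMap.range (M₀ : H →ₗ[ℂ] H))ᗮ)) (M₁ (u : H)) + (Submodule.orthogonalProjectionOnto ((LinearMap.range (M₀ : H →ₗ[ℂ] H))ᗮ)) (M₁ (v : H)) = 0 := by
          rw [← hPc z u v, hx]
          exact hPR _ w.2
        have hv : v = -(Binv ((Submodule.orthogonalProjectionOnto ((LinearMap.range (M₀ : H →ₗ[ℂ] H))ᗮ)) (M₁ (u : H)))) := by
          have h := congrArg Binv hPx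
          rw [map_add, hB2, map_zero] at h
          have h2 := eq_neg_of_add_eq_zero_left h
          rw [h2]; abel
        refine ⟨u, ?_⟩
        have h6 : (z • Mt0 + Mt1) u = z • Mt0 u + Mt1 u := rfl
        rw [h6, hMt1' u]
        have hQv : Q (M₁ (v : H)) = -Q (M₁ ((Binv ((Submodule.orthogonalProjectionOnto ((LinearMap.range (M₀ : H →ₗ[ℂ] H))ᗮ)) (M₁ (u : H))) : H))) := by
          rw [hv]; push_cast; rw [map_neg, map_neg]
        rw [← hQx, hQv]; abel
    · rintro ⟨ginj, gsurj⟩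
      constructor
      · rw [injective_iff_map_eq_zero]
        intro x hx
        set u : ↥((LinearMap.ker (M₀ : H →ₗ[ℂ] H))ᗮ) := Submodule.orthogonalProjectionOnto (LinearMap.ker (M₀ : H →ₗ[ℂ] H))ᗮ x with hudef
        set v : ↥(LinearMap.ker (M₀ : H →ₗ[ℂ] H)) := Submodule.orthogonalProjectionOnto (LinearMap.ker (M₀ : H →ₗ[ℂ] H)) x with hvdef
        have hxuv : x = (u : H) + (v : H) := hdecompX x
        rw [hxuv] at hx
        have hQx : z • Mt0 u + Q (M₁ (u : H)) + Q (M₁ (v : H)) = 0 := by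
          rw [← hQc z u v, hx, map_zero]
        have hPx : (Submodule.orthogonalProjectionOnto ((LinearMap.range (M₀ : H →ₗ[ℂ] H))ᗮ)) (M₁ (u : H)) + (Submodule.orthogonalProjectionOnto ((LinearMap.range (M₀ : H →ₗ[ℂ] H))ᗮ)) (M₁ (v : H)) = 0 := by
          rw [← hPc z u v, hx, map_zero]
        have hv : v = -(Binv ((Submodule.orthogonalProjectionOnto ((LinearMap.range (M₀ : H →ₗ[ℂ] H))ᗮ)) (M₁ (u : H)))) := by
          have h := congrArg Binv hPx
          rw [map_add, hB2, map_zero] at h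
          have h2 := eq_neg_of_add_eq_zero_left h
          rw [h2]; abel
        have hGu : (z • Mt0 + Mt1) u = 0 := by
          have h6 : (z • Mt0 + Mt1) u = z • Mt0 u + Mt1 u := rfl
          rw [h6, hMt1' u]
          have hQv : Q (M₁ (v : H)) = -Q (M₁ ((Binv ((Submodule.orthogonalProjectionOnto ((LinearMap.range (M₀ : H →ₗ[ℂ] H))ᗮ)) (M₁ (u : H))) : H))) := by
            rw [hv]; push_cast; rw [map_neg, map_neg]
          rw [← hQx, hQv]; abel
        have hu0 : u = 0 := by
          rw [injective_iff_map_eq_zero] at ginj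
          exact ginj u hGu
        have hv0 : v = 0 := by
          rw [hv, hu0]
          simp
        rw [hxuv, hu0, hv0]
        simp
      · intro y
        obtain ⟨u, hu⟩ := gsurj (Q y - Q (M₁ ((Binv ((Submodule.orthogonalProjectionOnto ((LinearMap.range (M₀ : H →ₗ[ℂ] H))ᗮ)) y) : H))))
        set v : ↥(LinearMap.ker (M₀ : H →ₗ[ℂ] H)) := Binv ((Submodule.orthogonalProjectionOnto ((LinearMap.range (M₀ : H →ₗ[ℂ] H))ᗮ)) y) - Binv ((Submodule.orthogonalProjectionOnto ((LinearMap.range (M₀ : H →ₗ[ℂ] H))ᗮ)) (M₁ (u : H))) with hvdef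
        refine ⟨(u : H) + (v : H), ?_⟩
        have hQx : Q ((z • M₀ + M₁) ((u : H) + (v : H))) = Q y := by
          rw [hQc z u v]
          have hvQ : Q (M₁ (v : H)) =
              Q (M₁ ((Binv ((Submodule.orthogonalProjectionOnto ((LinearMap.range (M₀ : H →ₗ[ℂ] H))ᗮ)) y) : H))) - Q (M₁ ((Binv ((Submodule.orthogonalProjectionOnto ((LinearMap.range (M₀ : H →ₗ[ℂ] H))ᗮ)) (M₁ (u : H))) : H))) := by
            rw [hvdef]; push_cast; rw [map_sub, map_sub]
          rw [hvQ]
          have hGu : z • Mt0 u + Mt1 u = Q y - Q (M₁ ((Binv ((Submodule.orthogonalProjectionOnto ((LinearMap.range (M₀ : H →ₗ[ℂ] H))ᗮ)) y) : H))) := by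
            rw [← hu]; rfl
          rw [hMt1' u] at hGu
          have h7 : z • Mt0 u + Q (M₁ (u : H)) +
              (Q (M₁ ((Binv ((Submodule.orthogonalProjectionOnto ((LinearMap.range (M₀ : H →ₗ[ℂ] H))ᗮ)) y) : H))) - Q (M₁ ((Binv ((Submodule.orthogonalProjectionOnto ((LinearMap.range (M₀ : H →ₗ[ℂ] H))ᗮ)) (M₁ (u : H))) : H)))) =
              (z • Mt0 u + (Q (M₁ (u : H)) - Q (M₁ ((Binv ((Submodule.orthogonalProjectionOnto ((LinearMap.range (M₀ : H →ₗ[ℂ] H))ᗮ)) (M₁ (u : H))) : H))))) +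
              Q (M₁ ((Binv ((Submodule.orthogonalProjectionOnto ((LinearMap.range (M₀ : H →ₗ[ℂ] H))ᗮ)) y) : H))) := by abel
          rw [h7, hGu]
          abel
        have hPx : (Submodule.orthogonalProjectionOnto ((LinearMap.range (M₀ : H →ₗ[ℂ] H))ᗮ)) ((z • M₀ + M₁) ((u : H) + (v : H))) = (Submodule.orthogonalProjectionOnto ((LinearMap.range (M₀ : H →ₗ[ℂ] H))ᗮ)) y := by
          rw [hPc z u v]
          have hvP : (Submodule.orthogonalProjectionOnto ((LinearMap.range (M₀ : H →ₗ[ℂ] H))ᗮ)) (M₁ (v : H)) = (Submodule.orthogonalProjectionOnto ((LinearMap.range (M₀ : H →ₗ[ℂ] H))ᗮ)) y - (Submodule.orthogonalProjectionOnto ((LinearMap.range (M₀ : H →ₗ[ℂ] H))ᗮ)) (M₁ (u : H)) := by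
            rw [hvdef]; push_cast; rw [map_sub, map_sub, hB1, hB1]
          rw [hvP]; abel
        calc (z • M₀ + M₁) ((u : H) + (v : H)) =
            ((Q ((z • M₀ + M₁) ((u : H) + (v : H))) : H)) +
            (((Submodule.orthogonalProjectionOnto ((LinearMap.range (M₀ : H →ₗ[ℂ] H))ᗮ)) ((z • M₀ + M₁) ((u : H) + (v : H))) : H)) := hdecompY _
          _ = ((Q y : H)) + (((Submodule.orthogonalProjectionOnto ((LinearMap.range (M₀ : H →ₗ[ℂ] H))ᗮ)) y : H)) := by rw [hQx, hPx]
          _ = y := (hdecompY y).symm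
  -- Part 1 : Mt0 is bijective
  have hMt0inj : Function.Injective ⇑Mt0 := by
    rw [injective_iff_map_eq_zero]
    intro u hu
    have h1 : M₀ (u : H) = 0 := by
      have h := congrArg (Subtype.val) hu
      rw [hMt0' u] at h
      rw [← hQM0 (u : H)]
      simpa using h
    have h2 : (u : H) ∈ (LinearMap.ker (M₀ : H →ₗ[ℂ] H)) := h1
    have h3 : (inner ℂ (u : H) (u : H) : ℂ) = 0 :=
      (Submodule.mem_orthogonal _ _).1 u.2 _ h2
    exact Subtype.ext (inner_self_eq_zero.mp h3)
  have hMt0surj : Function.Surjective ⇑Mt0 := by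
    intro w
    obtain ⟨x, hx⟩ := w.2
    set u : ↥((LinearMap.ker (M₀ : H →ₗ[ℂ] H))ᗮ) := Submodule.orthogonalProjectionOnto (LinearMap.ker (M₀ : H →ₗ[ℂ] H))ᗮ x with hudef
    set v : ↥(LinearMap.ker (M₀ : H →ₗ[ℂ] H)) := Submodule.orthogonalProjectionOnto (LinearMap.ker (M₀ : H →ₗ[ℂ] H)) x with hvdef
    have hxuv : x = (u : H) + (v : H) := hdecompX x
    refine ⟨u, Subtype.ext ?_⟩
    rw [hMt0' u, hQM0]
    rw [← hx, hxuv, map_add]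
    exact (add_zero _).symm.trans (congrArg (fun t => M₀ (u : H) + t) (hM0ker v).symm)
  have hker : Mt0.ker = ⊥ := LinearMap.ker_eq_bot.mpr hMt0inj
  have hrange : Mt0.range = ⊤ := LinearMap.range_eq_top.mpr hMt0surj
  constructor
  · refine ⟨(ContinuousLinearEquiv.ofBijective Mt0 hker hrange).symm.toContinuousLinearMap,
      ?_, ?_⟩
    · ext w
      simp only [ContinuousLinearMap.comp_apply, ContinuousLinearEquiv.coe_coe,
        ContinuousLinearMap.id_apply]
      exact congrArg Subtype.val (ContinuousLinearEquiv.ofBijective_apply_symm_apply Mt0 hker hrange w)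
    · ext u
      simp only [ContinuousLinearMap.comp_apply, ContinuousLinearEquiv.coe_coe,
        ContinuousLinearMap.id_apply]
      exact congrArg Subtype.val (ContinuousLinearEquiv.ofBijective_symm_apply_apply Mt0 hker hrange u)
  -- Part 2
  · intro S hS1 hS2
    have hS2u : ∀ u : ↥((LinearMap.ker (M₀ : H →ₗ[ℂ] H))ᗮ), S (Mt0 u) = u := by
      intro u
      have h := ContinuousLinearMap.ext_iff.mp hS2 u
      simpa using h
    have hSbij : Function.Bijective ⇑S := by
      refine Function.bijective_iff_has_inverse.mpr ⟨⇑Mt0, ?_, hS2u⟩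
      intro w
      have h := ContinuousLinearMap.ext_iff.mp hS1 w
      simpa using h
    ext z
    simp only [Set.mem_setOf_eq, spectrum.mem_iff]
    rw [not_iff_not]
    have hfactor : algebraMap ℂ (↥((LinearMap.ker (M₀ : H →ₗ[ℂ] H))ᗮ) →L[ℂ] ↥((LinearMap.ker (M₀ : H →ₗ[ℂ] H))ᗮ)) z - (-(S.comp Mt1)) =
        S.comp (z • Mt0 + Mt1) := by
      ext u
      simp only [ContinuousLinearMap.sub_apply, ContinuousLinearMap.neg_apply,
        ContinuousLinearMap.comp_apply, ContinuousLinearMap.add_apply,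
        ContinuousLinearMap.smul_apply, map_add, _root_.map_smul, hS2u u,
        ContinuousLinearMap.algebraMap_apply]
      abel
    rw [hfactor, ContinuousLinearMap.isUnit_iff_bijective,
      ContinuousLinearMap.isUnit_iff_bijective, ContinuousLinearMap.coe_comp']
    rw [hSbij.of_comp_iff']
    exact (key z).symm
end
end

section
/- Let H be a Hilbert space, M ∈ L(H), ρ₁ ∈ ℝ. For v ∈ H and ρ > max{‖M‖, 0}, define u_v := ℒ_ρ*( t ↦ (1/√(2π)) ((it+ρ)+M)⁻¹ v ). Then the following are equivalent: (i) for all v ∈ H and all ρ' > ρ₁, u_v ∈ L_{2,ρ'}(ℝ;H); (ii) σ(−M) ⊆ {z ∈ ℂ : Re z ≤ ρ₁}. -/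
set_option synthInstance.maxHeartbeats 1000000
set_option maxHeartbeats 1000000

open MeasureTheory Filter Set Complex
open scoped Topology

noncomputable section

section AuxAlgebra

open Nat

theorem aux_norm_exp_le {A : Type*} [NormedRing A] [NormedAlgebra ℂ A] [NormOneClass A] (x : A) :
    ‖NormedSpace.exp x‖ ≤ Real.exp ‖x‖ := by
  rw [NormedSpace.exp_eq_tsum ℂ]
  have h1 : ‖(∑' (n : ℕ), ((n ! : ℂ)⁻¹) • x ^ n)‖ ≤ ∑' (n : ℕ), ‖((n ! : ℂ)⁻¹) • x ^ n‖ :=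
    norm_tsum_le_tsum_norm (NormedSpace.norm_expSeries_summable' x)
  have h2 : ∑' (n : ℕ), ‖((n ! : ℂ)⁻¹) • x ^ n‖ ≤ ∑' (n : ℕ), ‖x‖ ^ n / n ! := by
    refine Summable.tsum_le_tsum (fun n => ?_) (NormedSpace.norm_expSeries_summable' x)
      (Real.summable_pow_div_factorial ‖x‖)
    rw [norm_smul, norm_inv, Complex.norm_natCast, inv_mul_eq_div]
    exact div_le_div_of_nonneg_right (norm_pow_le _ _) (by positivity) |>.trans_eq rfl
  have h3 : (∑' (n : ℕ), ‖x‖ ^ n / n !) = Real.exp ‖x‖ := by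
    rw [Real.exp_eq_exp_ℝ, NormedSpace.exp_eq_tsum_div]
  exact (h1.trans h2).trans_eq h3

theorem aux_adjoin_comm {A : Type*} [Ring A] [Algebra ℂ A] (a : A)
    (x y : Algebra.adjoin ℂ ({a} : Set A)) : x * y = y * x := by
  apply Subtype.ext
  have hx : (x : A) ∈ (Polynomial.aeval (R := ℂ) a).range := by
    rw [← Algebra.adjoin_singleton_eq_range_aeval]; exact x.2
  have hy : (y : A) ∈ (Polynomial.aeval (R := ℂ) a).range := by
    rw [← Algebra.adjoin_singleton_eq_range_aeval]; exact y.2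
  obtain ⟨p, hp⟩ := hx
  obtain ⟨q, hq⟩ := hy
  show (x : A) * (y : A) = (y : A) * (x : A)
  rw [← hp, ← hq, ← map_mul, ← map_mul, mul_comm]

theorem aux_spec_exp_norm_le {A : Type*} [NormedRing A] [NormedAlgebra ℂ A] [CompleteSpace A]
    [Nontrivial A] (a : A) (ρ₁ : ℝ) (h : spectrum ℂ a ⊆ {z : ℂ | z.re ≤ ρ₁})
    {z : ℂ} (hz : z ∈ spectrum ℂ (NormedSpace.exp a)) : ‖z‖ ≤ Real.exp ρ₁ := by
  let +nondep : NormedAlgebra ℚ A := .restrictScalars ℚ ℂ A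
  set S : Subalgebra ℂ A := (Algebra.adjoin ℂ ({a} : Set A)).topologicalClosure with hS
  haveI hSc : IsClosed (S : Set A) := Subalgebra.isClosed_topologicalClosure _
  haveI : CompleteSpace S := hSc.completeSpace_coe
  haveI : Nontrivial S := ⟨1, 0, fun hh => one_ne_zero (congrArg Subtype.val hh)⟩
  letI : CommRing S := Subalgebra.commRingTopologicalClosure _ (aux_adjoin_comm a)
  letI : NormedCommRing S := { (inferInstance : NormedRing S) with
    mul_comm := mul_comm }
  have ha_mem : a ∈ S := (Algebra.adjoin ℂ ({a} : Set A)).le_topologicalClosure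
    (Algebra.self_mem_adjoin_singleton ℂ a)
  set b : S := ⟨a, ha_mem⟩ with hb
  have hspecb : spectrum ℂ b ⊆ {z : ℂ | z.re ≤ ρ₁} := by
    intro w hw
    by_contra hw'
    simp only [Set.mem_setOf_eq, not_le] at hw'
    have hub : Bornology.IsBounded (connectedComponentIn (spectrum ℂ (b : A))ᶜ w) :=
      Subalgebra.spectrum_isBounded_connectedComponentIn S b hw
    have hhalf : {z : ℂ | ρ₁ < z.re} ⊆ connectedComponentIn (spectrum ℂ (b : A))ᶜ w := by
      refine IsPreconnected.subset_connectedComponentIn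
        (convex_halfSpace_re_gt ρ₁).isPreconnected hw' ?_
      intro u hu
      simp only [Set.mem_compl_iff]
      intro hu2
      have h3 := h hu2
      simp only [Set.mem_setOf_eq] at h3 hu
      linarith
    obtain ⟨R, hR⟩ := (hub.subset hhalf).exists_norm_le
    have hx := hR ((max (ρ₁ + 1) (R + 1) : ℝ) : ℂ) (by
      simp only [Set.mem_setOf_eq, Complex.ofReal_re]
      exact lt_of_lt_of_le (lt_add_one ρ₁) (le_max_left _ _))
    rw [Complex.norm_real, Real.norm_eq_abs] at hx
    have := le_abs_self (max (ρ₁ + 1) (R + 1))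
    have := le_max_right (ρ₁ + 1) (R + 1)
    linarith
  let +nondep : NormedAlgebra ℚ S := .restrictScalars ℚ ℂ S
  have hcoe : ((NormedSpace.exp b : S) : A) = NormedSpace.exp a := by
    have := NormedSpace.map_exp (S.val) continuous_subtype_val b
    simpa using this
  rw [← hcoe] at hz
  have hz2 : z ∈ spectrum ℂ (NormedSpace.exp b) := spectrum.subset_subalgebra _ hz
  obtain ⟨ψ, hψ⟩ := WeakDual.CharacterSpace.mem_spectrum_iff_exists.mp hz2
  have hψexp : ψ (NormedSpace.exp b) = Complex.exp (ψ b) := by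
    rw [NormedSpace.map_exp ψ (map_continuous ψ) b, Complex.exp_eq_exp_ℂ]
  have hre : (ψ b).re ≤ ρ₁ := hspecb (AlgHom.apply_mem_spectrum ψ b)
  rw [← hψ, hψexp, Complex.norm_exp]
  exact Real.exp_le_exp.mpr hre

theorem aux_exp_growth {A : Type*} [NormedRing A] [NormedAlgebra ℂ A] [CompleteSpace A]
    [NormOneClass A] (a : A) {ρ₁ ρ'' : ℝ} (h : spectrum ℂ a ⊆ {z : ℂ | z.re ≤ ρ₁})
    (hρ : ρ₁ < ρ'') :
    ∃ C : ℝ, 0 < C ∧ ∀ t : ℝ, 0 ≤ t → ‖NormedSpace.exp ((t : ℂ) • a)‖ ≤ C * Real.exp (ρ'' * t) := by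
  let +nondep : NormedAlgebra ℚ A := .restrictScalars ℚ ℂ A
  haveI : Nontrivial A := ⟨1, 0, fun hh => by simpa [hh] using (norm_one (α := A))⟩
  set x := NormedSpace.exp a with hx
  -- spectral radius bound
  have hsr : spectralRadius ℂ x ≤ ENNReal.ofReal (Real.exp ρ₁) := by
    refine iSup₂_le fun z hz => ?_
    rw [← enorm_eq_nnnorm, ← ofReal_norm]
    exact ENNReal.ofReal_le_ofReal (aux_spec_exp_norm_le a ρ₁ h hz)
  have hlt : spectralRadius ℂ x < ENNReal.ofReal (Real.exp ρ'') :=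
    lt_of_le_of_lt hsr (by
      rw [ENNReal.ofReal_lt_ofReal_iff (Real.exp_pos _)]
      exact Real.exp_lt_exp.mpr hρ)
  have hT := spectrum.pow_nnnorm_pow_one_div_tendsto_nhds_spectralRadius x
  have hev : ∀ᶠ n : ℕ in atTop, (‖x ^ n‖₊ : ENNReal) ^ (1 / (n : ℝ)) <
      ENNReal.ofReal (Real.exp ρ'') := hT.eventually_lt_const hlt
  obtain ⟨N, hN⟩ := eventually_atTop.mp hev
  set K := max N 1 with hK
  -- powers bound
  have hpow : ∀ n : ℕ, K ≤ n → ‖x ^ n‖ ≤ Real.exp (ρ'' * n) := by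
    intro n hn
    have hn1 : 1 ≤ n := le_trans (le_max_right N 1) hn
    have hnN : N ≤ n := le_trans (le_max_left N 1) hn
    have h1 := (hN n hnN).le
    have h2 : (‖x ^ n‖₊ : ENNReal) ≤ (ENNReal.ofReal (Real.exp ρ'')) ^ (n : ℝ) := by
      have h3 := ENNReal.rpow_le_rpow h1 (by positivity : (0:ℝ) ≤ (n:ℝ))
      rwa [← ENNReal.rpow_mul,
        one_div_mul_cancel (by positivity : (n:ℝ) ≠ 0),
        ENNReal.rpow_one] at h3
    rw [ENNReal.ofReal_rpow_of_pos (Real.exp_pos _),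
      Real.rpow_natCast, ← Real.exp_nat_mul] at h2
    rw [← enorm_eq_nnnorm, ← ofReal_norm] at h2
    have := (ENNReal.ofReal_le_ofReal_iff (Real.exp_pos _).le).mp h2
    rwa [mul_comm (n:ℝ) ρ''] at this
  -- main estimate
  set E := ‖a‖ + |ρ''| + K * ‖a‖ + |ρ''| * K with hE
  refine ⟨Real.exp E, Real.exp_pos _, fun t ht => ?_⟩
  rw [← Real.exp_add]
  set n := ⌊t⌋₊ with hn
  have hfl : (n : ℝ) ≤ t := Nat.floor_le ht
  have hfu : t < n + 1 := Nat.lt_floor_add_one t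
  have hKnn : (0:ℝ) ≤ K := by positivity
  by_cases hcase : K ≤ n
  · -- split exp
    have hsplit : ((t : ℂ)) • a = ((n : ℂ)) • a + (((t - n : ℝ) : ℂ)) • a := by
      rw [← add_smul]
      congr 1
      push_cast
      ring
    have hcomm : Commute (((n : ℂ)) • a) ((((t - n : ℝ) : ℂ)) • a) :=
      ((Commute.refl a).smul_right _).smul_left _
    have hmul : NormedSpace.exp ((t : ℂ) • a) =
        x ^ n * NormedSpace.exp (((t - n : ℝ) : ℂ) • a) := by
      rw [hsplit, NormedSpace.exp_add_of_commute hcomm]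
      congr 1
      rw [Nat.cast_smul_eq_nsmul ℂ n a, NormedSpace.exp_nsmul]
    rw [hmul]
    have h4 : ‖NormedSpace.exp (((t - n : ℝ) : ℂ) • a)‖ ≤ Real.exp ‖a‖ := by
      refine (aux_norm_exp_le _).trans (Real.exp_le_exp.mpr ?_)
      rw [norm_smul, Complex.norm_real, Real.norm_eq_abs, _root_.abs_of_nonneg (by linarith)]
      nlinarith [norm_nonneg a]
    have h5 : ‖x ^ n‖ ≤ Real.exp (ρ'' * n) := hpow n hcase
    calc ‖x ^ n * NormedSpace.exp (((t - n : ℝ) : ℂ) • a)‖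
        ≤ ‖x ^ n‖ * ‖NormedSpace.exp (((t - n : ℝ) : ℂ) • a)‖ := norm_mul_le _ _
      _ ≤ Real.exp (ρ'' * n) * Real.exp ‖a‖ := by
          exact mul_le_mul h5 h4 (norm_nonneg _) (Real.exp_pos _).le
      _ ≤ Real.exp (E + ρ'' * t) := by
          rw [← Real.exp_add, Real.exp_le_exp]
          have habs : ρ'' * ((n:ℝ) - t) ≤ |ρ''| := by
            calc ρ'' * ((n:ℝ) - t) ≤ |ρ'' * ((n:ℝ) - t)| := le_abs_self _
              _ = |ρ''| * |(n:ℝ) - t| := abs_mul _ _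
              _ ≤ |ρ''| * 1 := by
                  refine mul_le_mul_of_nonneg_left ?_ (abs_nonneg _)
                  rw [abs_le]; constructor <;> linarith
              _ = |ρ''| := mul_one _
          have h6 : 0 ≤ K * ‖a‖ := by positivity
          have h7 : 0 ≤ |ρ''| * K := by positivity
          nlinarith
  · -- small t
    have htK : t < K := by
      push_neg at hcase
      have : (n:ℝ) + 1 ≤ K := by exact_mod_cast hcase
      linarith
    have h4 : ‖NormedSpace.exp ((t : ℂ) • a)‖ ≤ Real.exp (t * ‖a‖) := by
      refine (aux_norm_exp_le _).trans (Real.exp_le_exp.mpr ?_)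
      rw [norm_smul, Complex.norm_real, Real.norm_eq_abs, _root_.abs_of_nonneg ht]
    refine h4.trans (Real.exp_le_exp.mpr ?_)
    have h5 : t * ‖a‖ ≤ K * ‖a‖ := mul_le_mul_of_nonneg_right htK.le (norm_nonneg _)
    have h6 : -ρ'' * t ≤ |ρ''| * t := mul_le_mul_of_nonneg_right (neg_le_abs _) ht
    have h7 : |ρ''| * t ≤ |ρ''| * K := mul_le_mul_of_nonneg_left htK.le (abs_nonneg _)
    have h8 : 0 ≤ ‖a‖ := norm_nonneg a
    have h9 : 0 ≤ |ρ''| := abs_nonneg _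
    nlinarith

end AuxAlgebra

variable {H : Type*} [NormedAddCommGroup H] [InnerProductSpace ℂ H] [CompleteSpace H]

theorem aux_exp_split (a : H →L[ℂ] H) (s t : ℝ) :
    NormedSpace.exp ((t : ℂ) • a) =
      NormedSpace.exp (((t - s : ℝ) : ℂ) • a) * NormedSpace.exp ((s : ℂ) • a) := by
  let +nondep : NormedAlgebra ℚ (H →L[ℂ] H) := .restrictScalars ℚ ℂ (H →L[ℂ] H)
  rw [← NormedSpace.exp_add_of_commute (((Commute.refl a).smul_right _).smul_left _), ← add_smul]
  congr 2
  push_cast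
  ring

theorem aux_exp_apply_norm_le [Nontrivial H] (a : H →L[ℂ] H) {s t : ℝ} (hs : s ≤ t) (v : H) :
    ‖NormedSpace.exp ((t : ℂ) • a) v‖ ≤
      Real.exp ((t - s) * ‖a‖) * ‖NormedSpace.exp ((s : ℂ) • a) v‖ := by
  rw [aux_exp_split a s t, ContinuousLinearMap.mul_apply]
  calc ‖NormedSpace.exp (((t - s : ℝ) : ℂ) • a) (NormedSpace.exp ((s : ℂ) • a) v)‖
      ≤ ‖NormedSpace.exp (((t - s : ℝ) : ℂ) • a)‖ * ‖NormedSpace.exp ((s : ℂ) • a) v‖ :=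
        ContinuousLinearMap.le_opNorm _ _
    _ ≤ Real.exp ((t - s) * ‖a‖) * ‖NormedSpace.exp ((s : ℂ) • a) v‖ := by
        refine mul_le_mul_of_nonneg_right ((aux_norm_exp_le _).trans ?_) (norm_nonneg _)
        rw [norm_smul, Complex.norm_real, Real.norm_eq_abs, _root_.abs_of_nonneg (by linarith)]

theorem dir_back [Nontrivial H] (M : H →L[ℂ] H) (ρ₁ : ℝ)
    (hspec : spectrum ℂ (-M) ⊆ {z : ℂ | z.re ≤ ρ₁}) (v : H) (ρ' : ℝ) (hρ' : ρ₁ < ρ') :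
    MeasureTheory.Integrable (fun t : ℝ =>
        ‖(if 0 ≤ t then (NormedSpace.exp ((-(t : ℂ)) • M)) v else 0 : H)‖ ^ 2 *
          Real.exp (-2 * ρ' * t)) volume := by
  set a : H →L[ℂ] H := -M with ha
  let +nondep : NormedAlgebra ℚ (H →L[ℂ] H) := .restrictScalars ℚ ℂ (H →L[ℂ] H)
  set ρ'' : ℝ := (ρ₁ + ρ') / 2 with hρ''
  obtain ⟨C, hC, hbound⟩ := aux_exp_growth a hspec (by rw [hρ'']; linarith : ρ₁ < ρ'')
  have hsmul : ∀ t : ℝ, (-(t : ℂ)) • M = (t : ℂ) • a := by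
    intro t; rw [ha, smul_neg, neg_smul]
  -- the H-valued path is continuous
  have hcont : Continuous fun t : ℝ => (NormedSpace.exp ((-(t : ℂ)) • M)) v := by
    have h1 : Continuous fun t : ℝ => NormedSpace.exp ((-(t : ℂ)) • M) :=
      NormedSpace.exp_continuous.comp ((Complex.continuous_ofReal.neg).smul continuous_const)
    exact h1.clm_apply continuous_const
  set f : ℝ → ℝ := fun t =>
    ‖(if 0 ≤ t then (NormedSpace.exp ((-(t : ℂ)) • M)) v else 0 : H)‖ ^ 2 *
      Real.exp (-2 * ρ' * t) with hf
  have hfmeas : AEStronglyMeasurable f volume := by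
    have h1 : Continuous fun t : ℝ =>
        ‖(NormedSpace.exp ((-(t : ℂ)) • M)) v‖ ^ 2 * Real.exp (-2 * ρ' * t) := by
      exact ((hcont.norm.pow 2).mul (Real.continuous_exp.comp (by continuity)))
    have h2 : f = (Set.Ici (0:ℝ)).indicator fun t =>
        ‖(NormedSpace.exp ((-(t : ℂ)) • M)) v‖ ^ 2 * Real.exp (-2 * ρ' * t) := by
      funext t
      rw [hf]
      simp only [Set.indicator_apply, Set.mem_Ici]
      by_cases h0 : (0:ℝ) ≤ t
      · rw [if_pos h0, if_pos h0]
      · rw [if_neg h0, if_neg h0]; simp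
    rw [h2]
    exact h1.aestronglyMeasurable.indicator measurableSet_Ici
  set g : ℝ → ℝ := fun t => (C * ‖v‖) ^ 2 *
    (Set.Ici (0:ℝ)).indicator (fun t => Real.exp (-(2 * (ρ' - ρ'')) * t)) t with hg
  have hgint : Integrable g volume := by
    have h1 : IntegrableOn (fun t : ℝ => Real.exp (-(2 * (ρ' - ρ'')) * t)) (Set.Ici 0) volume := by
      refine (integrableOn_Ici_iff_integrableOn_Ioi).mpr ?_
      exact exp_neg_integrableOn_Ioi 0 (by rw [hρ'']; linarith)
    exact (h1.integrable_indicator measurableSet_Ici).const_mul _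
  refine hgint.mono' hfmeas (Filter.Eventually.of_forall fun t => ?_)
  by_cases h0 : (0:ℝ) ≤ t
  · have key : ‖(NormedSpace.exp ((-(t : ℂ)) • M)) v‖ ≤ C * Real.exp (ρ'' * t) * ‖v‖ := by
      calc ‖(NormedSpace.exp ((-(t : ℂ)) • M)) v‖
          ≤ ‖NormedSpace.exp ((-(t : ℂ)) • M)‖ * ‖v‖ := ContinuousLinearMap.le_opNorm _ _
        _ ≤ C * Real.exp (ρ'' * t) * ‖v‖ := by
            refine mul_le_mul_of_nonneg_right ?_ (norm_nonneg _)
            rw [hsmul t]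
            exact hbound t h0
    have hft : f t = ‖(NormedSpace.exp ((-(t : ℂ)) • M)) v‖ ^ 2 * Real.exp (-2 * ρ' * t) := by
      rw [hf]; simp only [if_pos h0]
    have hft2 : ‖f t‖ = f t := by
      rw [Real.norm_eq_abs, _root_.abs_of_nonneg]
      rw [hft]; positivity
    rw [hft2, hft]
    have hgt : g t = (C * ‖v‖) ^ 2 * Real.exp (-(2 * (ρ' - ρ'')) * t) := by
      rw [hg]; simp only [Set.indicator_of_mem (Set.mem_Ici.mpr h0)]
    rw [hgt]
    have e1 : Real.exp (ρ'' * t) * Real.exp (ρ'' * t) * Real.exp (-2 * ρ' * t) =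
        Real.exp (-(2 * (ρ' - ρ'')) * t) := by
      rw [← Real.exp_add, ← Real.exp_add]
      congr 1
      ring
    calc ‖(NormedSpace.exp ((-(t : ℂ)) • M)) v‖ ^ 2 * Real.exp (-2 * ρ' * t)
        ≤ (C * Real.exp (ρ'' * t) * ‖v‖) ^ 2 * Real.exp (-2 * ρ' * t) := by
          refine mul_le_mul_of_nonneg_right ?_ (Real.exp_pos _).le
          exact pow_le_pow_left₀ (norm_nonneg _) key 2
      _ = (C * ‖v‖) ^ 2 *
          (Real.exp (ρ'' * t) * Real.exp (ρ'' * t) * Real.exp (-2 * ρ' * t)) := by ring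
      _ = (C * ‖v‖) ^ 2 * Real.exp (-(2 * (ρ' - ρ'')) * t) := by rw [e1]
  · have hft : f t = 0 := by
      rw [hf]; simp only [if_neg h0]
      simp
    rw [hft, norm_zero, hg]
    simp only [Set.indicator_of_notMem (by simpa using h0 : t ∉ Set.Ici (0:ℝ))]
    simp

theorem dir_fwd [Nontrivial H] (M : H →L[ℂ] H) (ρ₁ : ℝ)
    (hyp : ∀ v : H, ∀ ρ' : ℝ, ρ₁ < ρ' →
      MeasureTheory.Integrable (fun t : ℝ =>
        ‖(if 0 ≤ t then (NormedSpace.exp ((-(t : ℂ)) • M)) v else 0 : H)‖ ^ 2 *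
          Real.exp (-2 * ρ' * t)) volume) :
    spectrum ℂ (-M) ⊆ {z : ℂ | z.re ≤ ρ₁} := by
  set a : H →L[ℂ] H := -M with ha
  intro z hz
  simp only [Set.mem_setOf_eq]
  by_contra hre
  push_neg at hre
  set ρ' : ℝ := (ρ₁ + z.re) / 2 with hρ'
  have hρ'₁ : ρ₁ < ρ' := by rw [hρ']; linarith
  have hρ'z : ρ' < z.re := by rw [hρ']; linarith
  have hsmul : ∀ t : ℝ, (-(t : ℂ)) • M = (t : ℂ) • a := by
    intro t; rw [ha, smul_neg, neg_smul]
  have hexp0 : ∀ v : H, NormedSpace.exp (((0:ℝ) : ℂ) • a) v = v := by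
    intro v
    rw [show (((0:ℝ) : ℂ)) = (0 : ℂ) by norm_num, zero_smul, NormedSpace.exp_zero,
      ContinuousLinearMap.one_apply]
  -- Step A : pointwise exponential bound for each vector
  have stepA : ∀ v : H, ∃ K : ℝ, ∀ t : ℝ, 0 ≤ t →
      ‖NormedSpace.exp ((t : ℂ) • a) v‖ ≤ K * Real.exp (ρ' * t) := by
    intro v
    have hv := hyp v ρ' hρ'₁
    set f : ℝ → ℝ := fun t =>
      ‖(if 0 ≤ t then (NormedSpace.exp ((-(t : ℂ)) • M)) v else 0 : H)‖ ^ 2 *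
        Real.exp (-2 * ρ' * t) with hf
    have hf0 : ∀ t, 0 ≤ f t := fun t => by rw [hf]; positivity
    set I : ℝ := ∫ t, f t with hI
    set c : ℝ := Real.exp (-2 * ‖a‖ - 2 * |ρ'|) with hc
    have hcpos : 0 < c := Real.exp_pos _
    set D : ℝ := max I 0 / c with hD
    have hDnn : 0 ≤ D := by positivity
    have hXbound : ∀ t : ℝ, 1 ≤ t →
        c * ((‖NormedSpace.exp ((t : ℂ) • a) v‖ * Real.exp (-(ρ' * t))) ^ 2) ≤ max I 0 := by
      intro t ht
      set Y : ℝ := ‖NormedSpace.exp ((t : ℂ) • a) v‖ with hY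
      have hYnn : 0 ≤ Y := norm_nonneg _
      have hZ2 : (Y * Real.exp (-(ρ' * t))) ^ 2 = Y ^ 2 * Real.exp (-2 * ρ' * t) := by
        rw [mul_pow, ← Real.exp_nat_mul]
        congr 2
        push_cast
        ring
      rw [hZ2]
      have hsub : ∀ s ∈ Set.Icc (t - 1) t,
          c * (Y ^ 2 * Real.exp (-2 * ρ' * t)) ≤ f s := by
        intro s hs
        obtain ⟨hs1, hs2⟩ := hs
        have hs0 : 0 ≤ s := by linarith
        have h1 : Y ≤ Real.exp ‖a‖ * ‖NormedSpace.exp ((s : ℂ) • a) v‖ := by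
          refine (aux_exp_apply_norm_le a hs2 v).trans
            (mul_le_mul_of_nonneg_right ?_ (norm_nonneg _))
          exact Real.exp_le_exp.mpr (by nlinarith [norm_nonneg a])
        have h2 : Real.exp (-2 * ρ' * t) ≤ Real.exp (2 * |ρ'|) * Real.exp (-2 * ρ' * s) := by
          rw [← Real.exp_add, Real.exp_le_exp]
          have habs : -2 * ρ' * (t - s) ≤ |(-2 : ℝ) * ρ' * (t - s)| := le_abs_self _
          have habs2 : |(-2 : ℝ) * ρ' * (t - s)| ≤ 2 * |ρ'| := by
            rw [abs_mul, abs_mul, abs_neg, (by norm_num : |(2:ℝ)| = 2)]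
            have h3 : |t - s| ≤ 1 := by rw [abs_le]; constructor <;> linarith
            nlinarith [abs_nonneg ρ']
          nlinarith
        have hfs : f s = ‖NormedSpace.exp ((s : ℂ) • a) v‖ ^ 2 * Real.exp (-2 * ρ' * s) := by
          rw [hf]
          simp only [if_pos hs0]
          rw [hsmul s]
        rw [hfs, hc]
        set W : ℝ := ‖NormedSpace.exp ((s : ℂ) • a) v‖ with hW
        have hWnn : 0 ≤ W := norm_nonneg _
        have h1' : Y ^ 2 ≤ Real.exp ‖a‖ ^ 2 * W ^ 2 := by
          rw [← mul_pow]
          exact pow_le_pow_left₀ hYnn h1 2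
        have e1 : Real.exp (-2 * ‖a‖ - 2 * |ρ'|) * (Real.exp ‖a‖ ^ 2 * Real.exp (2 * |ρ'|)) = 1 := by
          rw [← Real.exp_nat_mul, ← Real.exp_add, ← Real.exp_add,
            show (-2 * ‖a‖ - 2 * |ρ'|) + (((2:ℕ) : ℝ) * ‖a‖ + 2 * |ρ'|) = 0 by push_cast; ring,
            Real.exp_zero]
        calc Real.exp (-2 * ‖a‖ - 2 * |ρ'|) * (Y ^ 2 * Real.exp (-2 * ρ' * t))
            ≤ Real.exp (-2 * ‖a‖ - 2 * |ρ'|) *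
                ((Real.exp ‖a‖ ^ 2 * W ^ 2) * (Real.exp (2 * |ρ'|) * Real.exp (-2 * ρ' * s))) := by
              refine mul_le_mul_of_nonneg_left ?_ (Real.exp_pos _).le
              refine mul_le_mul h1' h2 (Real.exp_pos _).le (by positivity)
          _ = (Real.exp (-2 * ‖a‖ - 2 * |ρ'|) * (Real.exp ‖a‖ ^ 2 * Real.exp (2 * |ρ'|))) *
                (W ^ 2 * Real.exp (-2 * ρ' * s)) := by ring
          _ = W ^ 2 * Real.exp (-2 * ρ' * s) := by rw [e1, one_mul]
      have hineq : c * (Y ^ 2 * Real.exp (-2 * ρ' * t)) * (volume (Set.Icc (t - 1) t)).toReal ≤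
          ∫ s in Set.Icc (t - 1) t, f s :=
        by have := setIntegral_ge_of_const_le measurableSet_Icc
             (by rw [Real.volume_Icc]; exact ENNReal.ofReal_ne_top) hsub hv.integrableOn
           rwa [measureReal_def, smul_eq_mul, mul_comm] at this
      rw [Real.volume_Icc, show t - (t - 1) = 1 by ring, ENNReal.toReal_ofReal one_pos.le,
        mul_one] at hineq
      exact hineq.trans ((setIntegral_le_integral hv
        (Filter.Eventually.of_forall hf0)).trans (le_max_left _ _))
    refine ⟨Real.sqrt D + Real.exp ‖a‖ * ‖v‖ * Real.exp |ρ'|, fun t ht => ?_⟩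
    have hKnn2 : 0 ≤ Real.exp ‖a‖ * ‖v‖ * Real.exp |ρ'| := by positivity
    by_cases ht1 : 1 ≤ t
    · have h1 := hXbound t ht1
      set Z : ℝ := ‖NormedSpace.exp ((t : ℂ) • a) v‖ * Real.exp (-(ρ' * t)) with hZdef
      have hZnn : 0 ≤ Z := by positivity
      have hZ2 : Z ^ 2 ≤ D := by
        rw [hD, le_div_iff₀ hcpos, mul_comm]
        exact h1
      have hZle : Z ≤ Real.sqrt D := by
        rw [show Z = Real.sqrt (Z ^ 2) by rw [Real.sqrt_sq hZnn]]
        exact Real.sqrt_le_sqrt hZ2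
      have emul : Real.exp (-(ρ' * t)) * Real.exp (ρ' * t) = 1 := by
        rw [← Real.exp_add, neg_add_cancel, Real.exp_zero]
      have : ‖NormedSpace.exp ((t : ℂ) • a) v‖ = Z * Real.exp (ρ' * t) := by
        rw [hZdef, mul_assoc, emul, mul_one]
      rw [this]
      have h2 : Z * Real.exp (ρ' * t) ≤ Real.sqrt D * Real.exp (ρ' * t) :=
        mul_le_mul_of_nonneg_right hZle (Real.exp_pos _).le
      refine h2.trans ?_
      refine mul_le_mul_of_nonneg_right ?_ (Real.exp_pos _).le
      linarith
    · push_neg at ht1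
      have h1 : ‖NormedSpace.exp ((t : ℂ) • a) v‖ ≤ Real.exp (t * ‖a‖) * ‖v‖ := by
        have h2 := aux_exp_apply_norm_le a (s := 0) (t := t) ht v
        rwa [hexp0 v, sub_zero] at h2
      refine h1.trans ?_
      have h3 : Real.exp (t * ‖a‖) ≤ Real.exp ‖a‖ := by
        rw [Real.exp_le_exp]
        nlinarith [norm_nonneg a]
      have h4 : Real.exp (-|ρ'|) ≤ Real.exp (ρ' * t) := by
        rw [Real.exp_le_exp]
        have h5 : -ρ' * t ≤ |ρ'| * t := mul_le_mul_of_nonneg_right (neg_le_abs _) ht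
        have h6 : |ρ'| * t ≤ |ρ'| := by nlinarith [abs_nonneg ρ']
        nlinarith
      have e2 : Real.exp |ρ'| * Real.exp (-|ρ'|) = 1 := by
        rw [← Real.exp_add, add_neg_cancel, Real.exp_zero]
      calc Real.exp (t * ‖a‖) * ‖v‖ ≤ Real.exp ‖a‖ * ‖v‖ :=
            mul_le_mul_of_nonneg_right h3 (norm_nonneg _)
        _ = (Real.exp ‖a‖ * ‖v‖ * Real.exp |ρ'|) * Real.exp (-|ρ'|) := by
            rw [mul_assoc, e2, mul_one]
        _ ≤ (Real.exp ‖a‖ * ‖v‖ * Real.exp |ρ'|) * Real.exp (ρ' * t) :=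
            mul_le_mul_of_nonneg_left h4 (by positivity)
        _ ≤ (Real.sqrt D + Real.exp ‖a‖ * ‖v‖ * Real.exp |ρ'|) * Real.exp (ρ' * t) := by
            refine mul_le_mul_of_nonneg_right ?_ (Real.exp_pos _).le
            have := Real.sqrt_nonneg D
            linarith
  -- Step B : Banach–Steinhaus
  set g : {t : ℝ // 0 ≤ t} → H →L[ℂ] H := fun t =>
    Real.exp (-(ρ' * t.1)) • NormedSpace.exp ((t.1 : ℂ) • a) with hg
  have hgb : ∀ v : H, ∃ C : ℝ, ∀ i, ‖g i v‖ ≤ C := by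
    intro v
    obtain ⟨K, hK⟩ := stepA v
    refine ⟨K, fun i => ?_⟩
    rw [hg]
    simp only [ContinuousLinearMap.smul_apply]
    rw [norm_smul, Real.norm_eq_abs, _root_.abs_of_nonneg (Real.exp_pos _).le]
    have h1 := hK i.1 i.2
    have emul : Real.exp (-(ρ' * i.1)) * Real.exp (ρ' * i.1) = 1 := by
      rw [← Real.exp_add, neg_add_cancel, Real.exp_zero]
    calc Real.exp (-(ρ' * i.1)) * ‖NormedSpace.exp ((i.1 : ℂ) • a) v‖
        ≤ Real.exp (-(ρ' * i.1)) * (K * Real.exp (ρ' * i.1)) :=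
          mul_le_mul_of_nonneg_left h1 (Real.exp_pos _).le
      _ = K * (Real.exp (-(ρ' * i.1)) * Real.exp (ρ' * i.1)) := by ring
      _ = K := by rw [emul, mul_one]
  obtain ⟨C', hC'⟩ := banach_steinhaus hgb
  set C'' : ℝ := max C' 1 with hC''
  have hC''pos : 0 < C'' := lt_of_lt_of_le one_pos (le_max_right _ _)
  have hopbound : ∀ t : ℝ, 0 ≤ t →
      ‖NormedSpace.exp ((t : ℂ) • a)‖ ≤ C'' * Real.exp (ρ' * t) := by
    intro t ht
    have h1 := (hC' ⟨t, ht⟩).trans (le_max_left C' 1)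
    rw [hg] at h1
    have h2 : ‖Real.exp (-(ρ' * t)) • NormedSpace.exp ((t : ℂ) • a)‖ =
        Real.exp (-(ρ' * t)) * ‖NormedSpace.exp ((t : ℂ) • a)‖ := by
      rw [norm_smul, Real.norm_eq_abs, _root_.abs_of_nonneg (Real.exp_pos _).le]
    rw [h2] at h1
    have emul : Real.exp (-(ρ' * t)) * Real.exp (ρ' * t) = 1 := by
      rw [← Real.exp_add, neg_add_cancel, Real.exp_zero]
    calc ‖NormedSpace.exp ((t : ℂ) • a)‖
        = (Real.exp (-(ρ' * t)) * ‖NormedSpace.exp ((t : ℂ) • a)‖) * Real.exp (ρ' * t) := by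
          rw [mul_comm (Real.exp (-(ρ' * t))) _, mul_assoc, emul, mul_one]
      _ ≤ C'' * Real.exp (ρ' * t) := mul_le_mul_of_nonneg_right h1 (Real.exp_pos _).le
  -- Step C : spectral lower bound gives a contradiction
  have hlow : ∀ t : ℝ, 0 < t → Real.exp (t * z.re) ≤ C'' * Real.exp (ρ' * t) := by
    intro t ht
    have hne : ((t : ℂ)) ≠ 0 := by
      simp only [ne_eq, Complex.ofReal_eq_zero]
      exact ne_of_gt ht
    have hz1 : (t : ℂ) * z ∈ spectrum ℂ ((t : ℂ) • a) := by
      rw [spectrum.smul_eq_smul (t : ℂ) a (spectrum.nonempty a)]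
      exact ⟨z, hz, rfl⟩
    have hz2 : NormedSpace.exp ((t : ℂ) * z) ∈
        spectrum ℂ (NormedSpace.exp ((t : ℂ) • a)) := spectrum.exp_mem_exp _ hz1
    have hz3 : ‖NormedSpace.exp ((t : ℂ) * z)‖ ≤ ‖NormedSpace.exp ((t : ℂ) • a)‖ :=
      spectrum.norm_le_norm_of_mem hz2
    have hz4 : ‖NormedSpace.exp ((t : ℂ) * z)‖ = Real.exp (t * z.re) := by
      rw [← Complex.exp_eq_exp_ℂ, Complex.norm_exp]
      congr 1
      simp [Complex.mul_re]
    rw [← hz4]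
    exact hz3.trans (hopbound t ht.le)
  set ε : ℝ := z.re - ρ' with hε
  have hεpos : 0 < ε := by rw [hε]; linarith
  set t₀ : ℝ := Real.log C'' / ε + 1 with ht₀
  have hlog : 0 ≤ Real.log C'' := Real.log_nonneg (le_max_right _ _)
  have ht₀pos : 0 < t₀ := by positivity
  have h1 := hlow t₀ ht₀pos
  have h2 : Real.exp (ε * t₀) ≤ C'' := by
    have e1 : Real.exp (t₀ * z.re) = Real.exp (ε * t₀) * Real.exp (ρ' * t₀) := by
      rw [← Real.exp_add]
      congr 1
      rw [hε]; ring
    rw [e1] at h1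
    exact le_of_mul_le_mul_right h1 (Real.exp_pos _)
  have h3 : Real.log C'' < ε * t₀ := by
    rw [ht₀]
    have : ε * (Real.log C'' / ε + 1) = Real.log C'' + ε := by
      field_simp
    rw [this]
    linarith
  have h4 : C'' < Real.exp (ε * t₀) := by
    calc C'' = Real.exp (Real.log C'') := (Real.exp_log hC''pos).symm
      _ < Real.exp (ε * t₀) := Real.exp_lt_exp.mpr h3
  linarith

/-- The solution `u_v = ℒ_ρ* ((i·+ρ)+M)⁻¹ v / √(2π)` equals `χ_{[0,∞)}(t) e^{−tM} v`;
it lies in every `L_{2,ρ'}` with `ρ' > ρ₁` for every `v` iff `σ(−M) ⊆ {Re ≤ ρ₁}`. -/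
theorem stmt_17 (M : H →L[ℂ] H) (ρ₁ : ℝ) :
    (∀ v : H, ∀ ρ' : ℝ, ρ₁ < ρ' →
      MeasureTheory.Integrable (fun t : ℝ =>
        ‖(if 0 ≤ t then (NormedSpace.exp ((-(t : ℂ)) • M)) v else 0 : H)‖ ^ 2 *
          Real.exp (-2 * ρ' * t)) volume) ↔
    spectrum ℂ (-M) ⊆ {z : ℂ | z.re ≤ ρ₁} := by
  rcases subsingleton_or_nontrivial H with hH | hH
  · haveI : Subsingleton (H →L[ℂ] H) :=
      ⟨fun f g => ContinuousLinearMap.ext fun x => Subsingleton.elim _ _⟩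
    constructor
    · intro _ w hw
      exact absurd (isUnit_of_subsingleton _) (spectrum.mem_iff.mp hw)
    · intro _ v ρ' _
      have hzero : ∀ t : ℝ,
          (if 0 ≤ t then (NormedSpace.exp ((-(t : ℂ)) • M)) v else 0 : H) = 0 :=
        fun t => Subsingleton.elim _ _
      simp only [hzero, norm_zero]
      simpa using (integrable_const (0:ℝ)).congr (Filter.Eventually.of_forall fun t => by ring)
  · exact ⟨fun hyp => dir_fwd M ρ₁ hyp, fun hspec v ρ' h => dir_back M ρ₁ hspec v ρ' h⟩
end
end
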